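/- arXiv:2604.13732 — 2 statements merged into one kernel-verified Lean document; each statement's English description precedes it below -/
import Mathlib

section
/- Let n ≥ 2 and κ ∈ [0, 1]. There exists a constant c = c(n) > 0 such that for every Lebesgue measurable function u : ℝⁿ → [−∞, ∞], ( ∫_{ℝⁿ} |u|^{n/(n−1)} dx )^{(n−1)/n} ≤ c ( ∫_{ℝⁿ} |u|^{(n−κ)/(n−1)} dH^{n−κ}_∞ )^{(n−1)/(n−κ)}; that is, the Choquet–Sobolev norm on the right-hand side dominates the classical Lebesgue L^{n/(n−1)} norm. -/
open scoped ENNReal NNReal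
open Metric Set Filter MeasureTheory

/-- The `δ`-dimensional Hausdorff content of a set `E ⊆ ℝⁿ`, defined via countable
covers of `E` by open balls. -/
noncomputable def hausdorffContent (n : ℕ) (δ : ℝ)
    (E : Set (EuclideanSpace ℝ (Fin n))) : ℝ≥0∞ :=
  ⨅ (c : ℕ → EuclideanSpace ℝ (Fin n) × ℝ) (_ : ∀ i, 0 < (c i).2)
    (_ : E ⊆ ⋃ i, Metric.ball (c i).1 (c i).2),
    ∑' i, ENNReal.ofReal ((c i).2 ^ δ)

/-- The Choquet integral of `f : ℝⁿ → [0, ∞]` with respect to the `δ`-dimensional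
Hausdorff content. -/
noncomputable def choquetIntegral (n : ℕ) (δ : ℝ)
    (f : EuclideanSpace ℝ (Fin n) → ℝ≥0∞) : ℝ≥0∞ :=
  ∫⁻ t in Set.Ioi (0 : ℝ), hausdorffContent n δ {x | ENNReal.ofReal t < f x}


/-!
A cover of `E` by balls `B(xᵢ, rᵢ)` gives `|E| ≤ |B₁| ∑ rᵢⁿ ≤ |B₁| (∑ rᵢ^δ)^{n/δ}`, so
`|E| ≤ |B₁| H^δ_∞(E)^{n/δ}` whenever `δ ≤ n`. For `f ≥ 0` with `A = ∫ f dH^δ_∞` and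
`H(t) = H^δ_∞{f > t}`, the Choquet integral has the weak-type bound `t H(t) ≤ A`, hence
`|{f > t}| t^{q-1} ≤ |B₁| (t H(t))^{q-1} H(t) ≤ |B₁| A^{q-1} H(t)` with `q = n/δ`.
Integrating in `t` (layer cake) gives `∫ f^q dx ≤ q |B₁| A^q`; the theorem is the case
`f = |u|^{(n-κ)/(n-1)}`.
-/

theorem EReal.measurable_abs : Measurable EReal.abs :=
  EReal.measurable_of_measurable_real _root_.measurable_abs.ennreal_ofReal

namespace ENNReal

theorem rpow_sub_one_mul_self (x : ℝ≥0∞) {p : ℝ} (hp : 1 ≤ p) : x ^ (p - 1) * x = x ^ p := by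
  conv_rhs => rw [← sub_add_cancel p 1]
  rw [rpow_add_of_nonneg _ _ (sub_nonneg.2 hp) zero_le_one, rpow_one]

theorem tsum_rpow_le_rpow_tsum {ι : Type*} (a : ι → ℝ≥0∞) {p : ℝ} (hp : 1 ≤ p) :
    ∑' i, a i ^ p ≤ (∑' i, a i) ^ p :=
  calc ∑' i, a i ^ p = ∑' i, a i ^ (p - 1) * a i := by simp_rw [rpow_sub_one_mul_self _ hp]
    _ ≤ ∑' i, (∑' j, a j) ^ (p - 1) * a i :=
      ENNReal.tsum_le_tsum fun i =>
        mul_le_mul_left (rpow_le_rpow (ENNReal.le_tsum i) (sub_nonneg.2 hp)) _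
    _ = (∑' i, a i) ^ p := by rw [ENNReal.tsum_mul_left, rpow_sub_one_mul_self _ hp]

end ENNReal

theorem ofReal_mul_le_setLIntegral_Ioi_of_antitone {H : ℝ → ℝ≥0∞} (hH : Antitone H) (t : ℝ) :
    ENNReal.ofReal t * H t ≤ ∫⁻ s in Ioi 0, H s :=
  calc ENNReal.ofReal t * H t = ∫⁻ _ in Ioc 0 t, H t := by
        rw [setLIntegral_const, Real.volume_Ioc, sub_zero, mul_comm]
    _ ≤ ∫⁻ s in Ioc 0 t, H s := setLIntegral_mono hH.measurable fun s hs => hH hs.2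
    _ ≤ ∫⁻ s in Ioi 0, H s := lintegral_mono_set Ioc_subset_Ioi_self

section HausdorffContent

variable {n : ℕ} {δ : ℝ}

theorem le_hausdorffContent {E : Set (EuclideanSpace ℝ (Fin n))} {a : ℝ≥0∞}
    (h : ∀ c : ℕ → EuclideanSpace ℝ (Fin n) × ℝ, (∀ i, 0 < (c i).2) →
      E ⊆ ⋃ i, ball (c i).1 (c i).2 → a ≤ ∑' i, ENNReal.ofReal ((c i).2 ^ δ)) :
    a ≤ hausdorffContent n δ E :=
  le_iInf₂ fun c hpos => le_iInf fun hcov => h c hpos hcov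

theorem hausdorffContent_mono {E F : Set (EuclideanSpace ℝ (Fin n))} (h : E ⊆ F) :
    hausdorffContent n δ E ≤ hausdorffContent n δ F :=
  le_hausdorffContent fun c hpos hcov =>
    iInf_le_of_le c <| iInf_le_of_le hpos <| iInf_le _ (h.trans hcov)

theorem volume_ball_eq_ofReal_rpow_rpow_mul (hδ : 0 < δ) (x : EuclideanSpace ℝ (Fin n)) {r : ℝ}
    (hr : 0 < r) :
    volume (ball x r) =
      ENNReal.ofReal (r ^ δ) ^ ((n : ℝ) / δ) * volume (ball (0 : EuclideanSpace ℝ (Fin n)) 1) := by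
  rw [Measure.addHaar_ball_of_pos _ _ hr, finrank_euclideanSpace_fin,
    ENNReal.ofReal_rpow_of_nonneg (by positivity) (by positivity), ← Real.rpow_mul hr.le,
    mul_div_cancel₀ _ hδ.ne', Real.rpow_natCast]

theorem volume_le_hausdorffContent_rpow (hδ : 0 < δ) (hδn : δ ≤ n)
    (E : Set (EuclideanSpace ℝ (Fin n))) :
    volume E ≤
      volume (ball (0 : EuclideanSpace ℝ (Fin n)) 1) * hausdorffContent n δ E ^ ((n : ℝ) / δ) := by
  set V := volume (ball (0 : EuclideanSpace ℝ (Fin n)) 1)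
  have hV0 : V ≠ 0 := (measure_ball_pos _ _ one_pos).ne'
  have hVtop : V ≠ ∞ := measure_ball_lt_top.ne
  have hq : 1 ≤ (n : ℝ) / δ := (one_le_div hδ).2 hδn
  have hcover : (volume E / V) ^ ((n : ℝ) / δ)⁻¹ ≤ hausdorffContent n δ E := by
    refine le_hausdorffContent fun c hpos hcov => ?_
    rw [ENNReal.rpow_inv_le_iff (by linarith)]
    refine ENNReal.div_le_of_le_mul ?_
    calc volume E ≤ ∑' i, volume (ball (c i).1 (c i).2) :=
          (measure_mono hcov).trans (measure_iUnion_le _)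
      _ = (∑' i, ENNReal.ofReal ((c i).2 ^ δ) ^ ((n : ℝ) / δ)) * V := by
        simp_rw [volume_ball_eq_ofReal_rpow_rpow_mul hδ _ (hpos _)]
        exact ENNReal.tsum_mul_right
      _ ≤ (∑' i, ENNReal.ofReal ((c i).2 ^ δ)) ^ ((n : ℝ) / δ) * V :=
        mul_le_mul_left (ENNReal.tsum_rpow_le_rpow_tsum _ hq) _
  calc volume E = V * (volume E / V) := (ENNReal.mul_div_cancel hV0 hVtop).symm
    _ ≤ V * hausdorffContent n δ E ^ ((n : ℝ) / δ) := by
      gcongr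
      exact (ENNReal.rpow_inv_le_iff (by linarith)).1 hcover

variable {f : EuclideanSpace ℝ (Fin n) → ℝ≥0∞}

theorem antitone_hausdorffContent_superlevel :
    Antitone fun t : ℝ => hausdorffContent n δ {x | ENNReal.ofReal t < f x} :=
  fun _ _ hst => hausdorffContent_mono fun _ hx => (ENNReal.ofReal_le_ofReal hst).trans_lt hx

theorem ofReal_mul_hausdorffContent_le_choquetIntegral (t : ℝ) :
    ENNReal.ofReal t * hausdorffContent n δ {x | ENNReal.ofReal t < f x} ≤ choquetIntegral n δ f :=
  ofReal_mul_le_setLIntegral_Ioi_of_antitone antitone_hausdorffContent_superlevel t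

theorem hausdorffContent_setOf_eq_top_eq_zero (hf : choquetIntegral n δ f ≠ ∞) :
    hausdorffContent n δ {x | f x = ∞} = 0 := by
  by_contra h
  refine hf (top_le_iff.1 ?_)
  calc ∞ = ∫⁻ _ in Ioi (0 : ℝ), hausdorffContent n δ {x | f x = ∞} := by
        rw [setLIntegral_const, Real.volume_Ioi, ENNReal.mul_top h]
    _ ≤ choquetIntegral n δ f :=
      lintegral_mono fun t => hausdorffContent_mono fun x (hx : f x = ∞) =>
        show ENNReal.ofReal t < f x by rw [hx]; exact ENNReal.ofReal_lt_top

theorem ae_ne_top_of_choquetIntegral_ne_top (hδ : 0 < δ) (hδn : δ ≤ n)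
    (hf : choquetIntegral n δ f ≠ ∞) : ∀ᵐ x, f x ≠ ∞ := by
  have h := volume_le_hausdorffContent_rpow hδ hδn {x | f x = ∞}
  rw [hausdorffContent_setOf_eq_top_eq_zero hf,
    ENNReal.zero_rpow_of_pos (div_pos (by linarith) hδ), mul_zero, nonpos_iff_eq_zero] at h
  simpa [ae_iff] using h

theorem volume_superlevel_mul_rpow_le (hδ : 0 < δ) (hδn : δ ≤ n) (t : ℝ) :
    volume {x | ENNReal.ofReal t < f x} * ENNReal.ofReal t ^ ((n : ℝ) / δ - 1) ≤
      volume (ball (0 : EuclideanSpace ℝ (Fin n)) 1) *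
        choquetIntegral n δ f ^ ((n : ℝ) / δ - 1) *
          hausdorffContent n δ {x | ENNReal.ofReal t < f x} := by
  set V := volume (ball (0 : EuclideanSpace ℝ (Fin n)) 1)
  set H := hausdorffContent n δ {x | ENNReal.ofReal t < f x}
  have hq : 1 ≤ (n : ℝ) / δ := (one_le_div hδ).2 hδn
  calc volume {x | ENNReal.ofReal t < f x} * ENNReal.ofReal t ^ ((n : ℝ) / δ - 1)
      ≤ V * H ^ ((n : ℝ) / δ) * ENNReal.ofReal t ^ ((n : ℝ) / δ - 1) := by
        gcongr
        exact volume_le_hausdorffContent_rpow hδ hδn _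
    _ = V * (ENNReal.ofReal t * H) ^ ((n : ℝ) / δ - 1) * H := by
        rw [ENNReal.mul_rpow_of_nonneg _ _ (by linarith), ← ENNReal.rpow_sub_one_mul_self _ hq]
        ring
    _ ≤ V * choquetIntegral n δ f ^ ((n : ℝ) / δ - 1) * H := by
        gcongr
        exact ofReal_mul_hausdorffContent_le_choquetIntegral t

end HausdorffContent

theorem lintegral_rpow_le_choquetIntegral_rpow {n : ℕ} {δ : ℝ} (hδ : 0 < δ) (hδn : δ ≤ n)
    {f : EuclideanSpace ℝ (Fin n) → ℝ≥0∞} (hf : Measurable f) :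
    ∫⁻ x, f x ^ ((n : ℝ) / δ) ≤ ENNReal.ofReal ((n : ℝ) / δ) *
      volume (ball (0 : EuclideanSpace ℝ (Fin n)) 1) * choquetIntegral n δ f ^ ((n : ℝ) / δ) := by
  set q : ℝ := (n : ℝ) / δ
  set V := volume (ball (0 : EuclideanSpace ℝ (Fin n)) 1)
  set A := choquetIntegral n δ f
  set H : ℝ → ℝ≥0∞ := fun t => hausdorffContent n δ {x | ENNReal.ofReal t < f x}
  have hq : 1 ≤ q := (one_le_div hδ).2 hδn
  have hq0 : 0 < q := by linarith
  rcases eq_or_ne A ∞ with hA | hA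
  · have hqV : ENNReal.ofReal q * V ≠ 0 :=
      mul_ne_zero (ENNReal.ofReal_pos.2 hq0).ne' (measure_ball_pos _ _ one_pos).ne'
    rw [hA, ENNReal.top_rpow_of_pos hq0, ENNReal.mul_top hqV]
    exact le_top
  have hfin := ae_ne_top_of_choquetIntegral_ne_top hδ hδn hA
  -- The layer-cake formula is stated for real functions; `f = F` off the null set `{f = ∞}`.
  set F : EuclideanSpace ℝ (Fin n) → ℝ := fun x => (f x).toReal
  have hlayer : ∫⁻ x, f x ^ q =
      ENNReal.ofReal q * ∫⁻ t in Ioi 0, volume {x | t < F x} * ENNReal.ofReal (t ^ (q - 1)) := by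
    rw [← lintegral_rpow_eq_lintegral_meas_lt_mul volume
      (ae_of_all _ fun _ => ENNReal.toReal_nonneg) hf.ennreal_toReal.aemeasurable hq0]
    refine lintegral_congr_ae (hfin.mono fun x hx => ?_)
    show f x ^ q = ENNReal.ofReal ((f x).toReal ^ q)
    rw [← ENNReal.ofReal_rpow_of_nonneg ENNReal.toReal_nonneg hq0.le, ENNReal.ofReal_toReal hx]
  have hlevel : ∀ t ∈ Ioi (0 : ℝ),
      volume {x | t < F x} * ENNReal.ofReal (t ^ (q - 1)) ≤ V * A ^ (q - 1) * H t := by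
    intro t ht
    have hset : volume {x | t < F x} = volume {x | ENNReal.ofReal t < f x} :=
      measure_congr <| eventuallyEq_set.2 <| hfin.mono fun x hx =>
        (ENNReal.ofReal_lt_iff_lt_toReal (le_of_lt ht) hx).symm
    rw [hset, ← ENNReal.ofReal_rpow_of_pos ht]
    exact volume_superlevel_mul_rpow_le hδ hδn t
  calc ∫⁻ x, f x ^ q
      = ENNReal.ofReal q * ∫⁻ t in Ioi 0, volume {x | t < F x} * ENNReal.ofReal (t ^ (q - 1)) :=
        hlayer
    _ ≤ ENNReal.ofReal q * ∫⁻ t in Ioi 0, V * A ^ (q - 1) * H t := by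
        gcongr ENNReal.ofReal q * ?_
        exact setLIntegral_mono (antitone_hausdorffContent_superlevel.measurable.const_mul _) hlevel
    _ = ENNReal.ofReal q * V * A ^ q := by
        rw [lintegral_const_mul _ antitone_hausdorffContent_superlevel.measurable,
          ← ENNReal.rpow_sub_one_mul_self A hq]
        change _ * (_ * A) = _
        ring

/-- The Choquet–Sobolev norm dominates the classical $L^{n/(n-1)}$ norm. -/
theorem stmt_8 (n : ℕ) (hn : 2 ≤ n) (κ : ℝ) (hκ0 : 0 ≤ κ) (hκ1 : κ ≤ 1) :
    ∃ c : ℝ, 0 < c ∧ ∀ u : EuclideanSpace ℝ (Fin n) → EReal, Measurable u →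
      (∫⁻ x, (u x).abs ^ ((n : ℝ) / ((n : ℝ) - 1))) ^ (((n : ℝ) - 1) / n)
        ≤ ENNReal.ofReal c *
          (choquetIntegral n ((n : ℝ) - κ)
            (fun x => (u x).abs ^ (((n : ℝ) - κ) / ((n : ℝ) - 1))))
            ^ (((n : ℝ) - 1) / ((n : ℝ) - κ)) := by
  have hn1 : (1 : ℝ) ≤ n - 1 := by
    have : (2 : ℝ) ≤ n := by exact_mod_cast hn
    linarith
  have hδ : 0 < (n : ℝ) - κ := by linarith
  set V := volume (ball (0 : EuclideanSpace ℝ (Fin n)) 1)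
  have hV : 0 < V.toReal :=
    ENNReal.toReal_pos (measure_ball_pos _ _ one_pos).ne' measure_ball_lt_top.ne
  refine ⟨((n / (n - κ)) * V.toReal) ^ (((n : ℝ) - 1) / n), by positivity, fun u hu => ?_⟩
  have hsplit : ∀ x, (u x).abs ^ ((n : ℝ) / (n - 1)) =
      ((u x).abs ^ ((n - κ) / (n - 1))) ^ ((n : ℝ) / (n - κ)) := fun x => by
    rw [← ENNReal.rpow_mul]
    congr 1
    field_simp
  have key := lintegral_rpow_le_choquetIntegral_rpow hδ (by linarith)
    ((EReal.measurable_abs.comp hu).pow_const (((n : ℝ) - κ) / (n - 1)))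
  calc (∫⁻ x, (u x).abs ^ ((n : ℝ) / (n - 1))) ^ (((n : ℝ) - 1) / n)
      ≤ (ENNReal.ofReal (n / (n - κ)) * V * _ ^ ((n : ℝ) / (n - κ))) ^ (((n : ℝ) - 1) / n) := by
        simp_rw [hsplit]
        exact ENNReal.rpow_le_rpow key (by positivity)
    _ = _ := by
        rw [ENNReal.mul_rpow_of_nonneg _ _ (by positivity), ← ENNReal.rpow_mul,
          ← ENNReal.ofReal_rpow_of_nonneg (by positivity) (by positivity),
          ENNReal.ofReal_mul (by positivity), ENNReal.ofReal_toReal measure_ball_lt_top.ne]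
        congr 2
        field_simp
end

section
/- For every n ≥ 1 there exists a constant c(n) > 0 such that for every δ ∈ (0, n] and every sequence (f_i)_{i=1}^∞ of functions f_i : ℝⁿ → [0, ∞], ∫_{ℝⁿ} (liminf_{i→∞} f_i) dH^δ_∞ ≤ c(n) · liminf_{i→∞} ∫_{ℝⁿ} f_i dH^δ_∞ (a Fatou-type lemma for the Choquet integral with respect to Hausdorff content). -/
open scoped ENNReal NNReal
open Metric Set Filter MeasureTheory

/-!
Dyadic cubes are nested or disjoint, so a cover by dyadic cubes of bounded size may be replaced by
its maximal cubes. This makes the dyadic content satisfy Davies' increasing sets lemma: when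
`A m ↑ A`, near-optimal covers of the `A m` are merged one after the other into covers `J m` by
maximal cubes, whose weights stay under control because merging `F` and `G` loses at most the
weight of a cover of `⋃ F ∩ ⋃ G ⊇ A (m - 1)`; the cubes lying in all but finitely many `J m`
then cover `A`. Since `δ ≤ n`, dyadic content and Hausdorff content agree up to factors
depending only on `n`, so `H^δ_∞ (⋃ A m) ≤ c ⨆ H^δ_∞ (A m)`. Applied to the sets
`⋂_{i ≥ N} {f i > t}` this gives Fatou's inequality for the level sets, and Fatou's lemma for
the integral in `t` concludes.
-/

lemma rpow_le_pow_of_exponent_le_natCast {a δ : ℝ} {n : ℕ} (ha : 1 ≤ a) (hδn : δ ≤ n) :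
    a ^ δ ≤ a ^ n := by
  simpa using Real.rpow_le_rpow_of_exponent_le ha hδn

abbrev DyadicIndex (n : ℕ) := ℤ × (Fin n → ℤ)

def dyadicInterval (k m : ℤ) : Set ℝ := Ico (m * 2 ^ k) ((m + 1) * 2 ^ k)

lemma mem_dyadicInterval_iff {k m : ℤ} {t : ℝ} :
    t ∈ dyadicInterval k m ↔ ⌊t / 2 ^ k⌋ = m := by
  rw [Int.floor_eq_iff, le_div_iff₀ (by positivity), div_lt_iff₀ (by positivity)]
  rfl

lemma left_mem_dyadicInterval (k m : ℤ) : (m : ℝ) * 2 ^ k ∈ dyadicInterval k m :=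
  left_mem_Ico.2 (by gcongr; linarith)

lemma floor_div_two_zpow_of_le {k k' : ℤ} (h : k ≤ k') (t : ℝ) :
    ⌊t / 2 ^ k'⌋ = ⌊t / 2 ^ k⌋ / 2 ^ (k' - k).toNat := by
  have : (2 : ℝ) ^ k' = 2 ^ k * ((2 ^ (k' - k).toNat : ℕ) : ℝ) := by
    rw [Nat.cast_pow, Nat.cast_ofNat, ← zpow_natCast, Int.toNat_of_nonneg (by omega),
      ← zpow_add₀ two_ne_zero, add_sub_cancel]
  rw [this, ← div_div, Int.floor_div_natCast, Nat.cast_pow, Nat.cast_ofNat]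

lemma dyadicInterval_subset_of_le {k k' m m' : ℤ} (h : k ≤ k') {t : ℝ}
    (ht : t ∈ dyadicInterval k m) (ht' : t ∈ dyadicInterval k' m') :
    dyadicInterval k m ⊆ dyadicInterval k' m' := by
  intro s hs
  rw [mem_dyadicInterval_iff] at hs ht ht' ⊢
  rw [floor_div_two_zpow_of_le h, hs, ← ht, ← floor_div_two_zpow_of_le h, ht']

lemma le_of_dyadicInterval_subset {k k' m m' : ℤ}
    (h : dyadicInterval k m ⊆ dyadicInterval k' m') : k ≤ k' := by
  have hk : (0 : ℝ) < 2 ^ k := by positivity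
  rw [dyadicInterval, dyadicInterval, Ico_subset_Ico_iff (by nlinarith)] at h
  have : (2 : ℝ) ^ k ≤ 2 ^ k' := by linarith [h.1, h.2]
  exact (zpow_le_zpow_iff_right₀ one_lt_two).mp this

lemma eq_of_dyadicInterval_subset {k m m' : ℤ}
    (h : dyadicInterval k m ⊆ dyadicInterval k m') : m = m' := by
  have := mem_dyadicInterval_iff.1 (h (left_mem_dyadicInterval k m))
  rwa [mul_div_cancel_right₀ _ (by positivity), Int.floor_intCast] at this

section

variable {n : ℕ}

def dyadicCube (q : DyadicIndex n) : Set (EuclideanSpace ℝ (Fin n)) :=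
  WithLp.ofLp ⁻¹' univ.pi fun i => dyadicInterval q.1 (q.2 i)

lemma mem_dyadicCube {q : DyadicIndex n} {x : EuclideanSpace ℝ (Fin n)} :
    x ∈ dyadicCube q ↔ ∀ i, x i ∈ dyadicInterval q.1 (q.2 i) :=
  Set.mem_univ_pi

lemma dyadicCube_subset_iff {q r : DyadicIndex n} :
    dyadicCube q ⊆ dyadicCube r ↔
      ∀ i, dyadicInterval q.1 (q.2 i) ⊆ dyadicInterval r.1 (r.2 i) := by
  rw [dyadicCube, dyadicCube, (WithLp.ofLp_surjective 2).preimage_subset_preimage_iff,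
    Set.univ_pi_subset_univ_pi_iff]
  exact or_iff_left fun ⟨_, hi⟩ => hi.subset (left_mem_dyadicInterval _ _)

noncomputable def dyadicCorner (q : DyadicIndex n) : EuclideanSpace ℝ (Fin n) :=
  WithLp.toLp 2 fun i => (q.2 i : ℝ) * 2 ^ q.1

lemma dyadicCube_subset_of_le {q r : DyadicIndex n} (h : q.1 ≤ r.1)
    {x : EuclideanSpace ℝ (Fin n)} (hq : x ∈ dyadicCube q) (hr : x ∈ dyadicCube r) :
    dyadicCube q ⊆ dyadicCube r :=
  dyadicCube_subset_iff.2 fun i =>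
    dyadicInterval_subset_of_le h (mem_dyadicCube.1 hq i) (mem_dyadicCube.1 hr i)

lemma dyadicCube_subset_or_subset {q r : DyadicIndex n} {x : EuclideanSpace ℝ (Fin n)}
    (hq : x ∈ dyadicCube q) (hr : x ∈ dyadicCube r) :
    dyadicCube q ⊆ dyadicCube r ∨ dyadicCube r ⊆ dyadicCube q :=
  (le_total q.1 r.1).imp (dyadicCube_subset_of_le · hq hr) (dyadicCube_subset_of_le · hr hq)

lemma le_of_dyadicCube_subset [NeZero n] {q r : DyadicIndex n}
    (h : dyadicCube q ⊆ dyadicCube r) : q.1 ≤ r.1 :=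
  le_of_dyadicInterval_subset (dyadicCube_subset_iff.1 h 0)

lemma eq_of_dyadicCube_subset {q r : DyadicIndex n} (hk : q.1 = r.1)
    (h : dyadicCube q ⊆ dyadicCube r) : q = r := by
  obtain ⟨k, m⟩ := q
  obtain ⟨k', m'⟩ := r
  obtain rfl : k = k' := hk
  exact Prod.ext rfl (funext fun i => eq_of_dyadicInterval_subset (dyadicCube_subset_iff.1 h i))

lemma dyadicCube_subset_ball (q : DyadicIndex n) :
    dyadicCube q ⊆ ball (dyadicCorner q) ((n + 1) * 2 ^ q.1) := by
  intro x hx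
  have hd i : dist (x i) (dyadicCorner q i) < 2 ^ q.1 := by
    have := mem_dyadicCube.1 hx i
    rw [dyadicInterval, mem_Ico] at this
    rw [Real.dist_eq, abs_sub_lt_iff]
    exact ⟨by simp only [dyadicCorner]; linarith, by simp only [dyadicCorner]; linarith⟩
  rw [mem_ball, EuclideanSpace.dist_eq]
  calc √(∑ i, dist (x i) (dyadicCorner q i) ^ 2)
        ≤ √(∑ _i : Fin n, ((2 : ℝ) ^ q.1) ^ 2) := by
        gcongr with i
        exact (hd i).le
    _ = √n * 2 ^ q.1 := by simp [Real.sqrt_sq (zpow_pos two_pos _).le]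
    _ < (n + 1) * 2 ^ q.1 := by
        gcongr
        rw [Real.sqrt_lt' (by positivity)]
        nlinarith

variable (n) in
noncomputable def dyadicWeight (δ : ℝ) : Measure (DyadicIndex n) :=
  Measure.sum fun q => ENNReal.ofReal (((2 : ℝ) ^ q.1) ^ δ) • Measure.dirac q

lemma dyadicWeight_apply (δ : ℝ) (S : Set (DyadicIndex n)) :
    dyadicWeight n δ S = ∑' q : S, ENNReal.ofReal (((2 : ℝ) ^ q.1.1) ^ δ) := by
  rw [dyadicWeight, Measure.sum_apply _ .of_discrete,
    tsum_subtype S fun q : DyadicIndex n => ENNReal.ofReal (((2 : ℝ) ^ q.1) ^ δ)]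
  congr 1 with q
  by_cases hq : q ∈ S <;> simp [hq]

lemma dyadicWeight_singleton (δ : ℝ) (q : DyadicIndex n) :
    dyadicWeight n δ {q} = ENNReal.ofReal (((2 : ℝ) ^ q.1) ^ δ) := by
  rw [dyadicWeight_apply,
    tsum_singleton (f := fun q : DyadicIndex n => ENNReal.ofReal (((2 : ℝ) ^ q.1) ^ δ))]

variable (n) in
noncomputable def dyadicContent (δ : ℝ) (E : Set (EuclideanSpace ℝ (Fin n))) : ℝ≥0∞ :=
  ⨅ (S : Set (DyadicIndex n)) (_ : E ⊆ ⋃ q ∈ S, dyadicCube q), dyadicWeight n δ S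

section DyadicContent

variable {δ : ℝ} {E : Set (EuclideanSpace ℝ (Fin n))}

lemma dyadicContent_le {S : Set (DyadicIndex n)} (h : E ⊆ ⋃ q ∈ S, dyadicCube q) :
    dyadicContent n δ E ≤ dyadicWeight n δ S :=
  iInf₂_le S h

lemma exists_cover_of_dyadicContent_lt {b : ℝ≥0∞} (h : dyadicContent n δ E < b) :
    ∃ S : Set (DyadicIndex n), E ⊆ ⋃ q ∈ S, dyadicCube q ∧ dyadicWeight n δ S < b := by
  simpa only [dyadicContent, iInf_lt_iff, exists_prop] using h

lemma dyadicContent_mono : Monotone (dyadicContent n δ) :=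
  fun _ _ h => le_iInf₂ fun _ hS => dyadicContent_le (h.trans hS)

lemma exists_scale_le_of_dyadicWeight_le (hδ : 0 < δ) {B : ℝ≥0∞} (hB : B ≠ ⊤) :
    ∃ K : ℤ, ∀ S : Set (DyadicIndex n), dyadicWeight n δ S ≤ B →
      ∀ q ∈ S, q.1 ≤ K := by
  obtain ⟨N, hN⟩ := pow_unbounded_of_one_lt B.toReal (Real.one_lt_rpow one_lt_two hδ)
  refine ⟨N, fun S hS q hq => ?_⟩
  have hq : ((2 : ℝ) ^ q.1) ^ δ ≤ B.toReal := by
    rw [← ENNReal.ofReal_le_iff_le_toReal hB, ← dyadicWeight_singleton]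
    exact (measure_mono (singleton_subset_iff.2 hq)).trans hS
  by_contra! hlt
  rw [← Real.rpow_zpow_comm zero_le_two] at hq
  have := zpow_le_zpow_right₀ (Real.one_lt_rpow one_lt_two hδ).le hlt.le
  rw [zpow_natCast] at this
  linarith

end DyadicContent

def maximalCubes (F : Set (DyadicIndex n)) : Set (DyadicIndex n) :=
  {q ∈ F | ∀ r ∈ F, dyadicCube q ⊆ dyadicCube r → q = r}

section MaximalCubes

variable {F G : Set (DyadicIndex n)}

lemma maximalCubes_subset (F : Set (DyadicIndex n)) : maximalCubes F ⊆ F := fun _ h => h.1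

lemma eq_of_mem_maximalCubes {q r : DyadicIndex n} (hq : q ∈ maximalCubes F)
    (hr : r ∈ maximalCubes F) {x : EuclideanSpace ℝ (Fin n)} (hxq : x ∈ dyadicCube q)
    (hxr : x ∈ dyadicCube r) : q = r :=
  (dyadicCube_subset_or_subset hxq hxr).elim (hq.2 r hr.1) fun h => (hr.2 q hq.1 h).symm

lemma exists_mem_maximalCubes_superset [NeZero n] {K : ℤ} (hK : ∀ q ∈ F, q.1 ≤ K)
    {q : DyadicIndex n} (hq : q ∈ F) :
    ∃ r ∈ maximalCubes F, dyadicCube q ⊆ dyadicCube r := by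
  obtain ⟨_, ⟨r, hrF, hqr, rfl⟩, hmax⟩ :=
    Int.exists_greatest_of_bdd
      (P := fun k => ∃ r ∈ F, dyadicCube q ⊆ dyadicCube r ∧ r.1 = k)
      ⟨K, fun _ ⟨r, hr, _, hk⟩ => hk ▸ hK r hr⟩ ⟨q.1, q, hq, subset_rfl, rfl⟩
  refine ⟨r, ⟨hrF, fun t ht hrt => eq_of_dyadicCube_subset ?_ hrt⟩, hqr⟩
  exact le_antisymm (le_of_dyadicCube_subset hrt) (hmax _ ⟨t, ht, hqr.trans hrt, rfl⟩)

lemma biUnion_maximalCubes [NeZero n] {K : ℤ} (hK : ∀ q ∈ F, q.1 ≤ K) :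
    ⋃ q ∈ maximalCubes F, dyadicCube q = ⋃ q ∈ F, dyadicCube q := by
  refine (biUnion_subset_biUnion_left (maximalCubes_subset F)).antisymm ?_
  simp only [iUnion_subset_iff]
  intro q hq x hx
  obtain ⟨r, hr, hqr⟩ := exists_mem_maximalCubes_superset hK hq
  exact mem_biUnion hr (hqr hx)

/-- Submodularity of the dyadic weight: the cubes of `F ∪ G` that are not maximal, together with
`F ∩ G`, still cover the intersection of the two unions. -/
lemma dyadicWeight_maximalCubes_union_add_le (δ : ℝ) (F G : Set (DyadicIndex n)) :
    dyadicWeight n δ (maximalCubes (F ∪ G)) +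
        dyadicContent n δ ((⋃ q ∈ F, dyadicCube q) ∩ ⋃ q ∈ G, dyadicCube q) ≤
      dyadicWeight n δ F + dyadicWeight n δ G := by
  set M := maximalCubes (F ∪ G)
  have hcov : (⋃ q ∈ F, dyadicCube q) ∩ (⋃ q ∈ G, dyadicCube q) ⊆
      ⋃ q ∈ (F ∩ G) ∪ ((F ∪ G) \ M), dyadicCube q := by
    rintro x ⟨hF, hG⟩
    obtain ⟨q, hq, hxq⟩ := mem_iUnion₂.1 hF
    obtain ⟨r, hr, hxr⟩ := mem_iUnion₂.1 hG
    rcases dyadicCube_subset_or_subset hxq hxr with h | h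
    · by_cases hM : q ∈ M
      · obtain rfl := hM.2 r (Or.inr hr) h
        exact mem_biUnion (Or.inl ⟨hq, hr⟩) hxq
      · exact mem_biUnion (Or.inr ⟨Or.inl hq, hM⟩) hxq
    · by_cases hM : r ∈ M
      · obtain rfl := hM.2 q (Or.inl hq) h
        exact mem_biUnion (Or.inl ⟨hq, hr⟩) hxr
      · exact mem_biUnion (Or.inr ⟨Or.inr hr, hM⟩) hxr
  calc dyadicWeight n δ M + dyadicContent n δ _
      ≤ dyadicWeight n δ M +
          (dyadicWeight n δ (F ∩ G) + dyadicWeight n δ ((F ∪ G) \ M)) := by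
        gcongr
        exact (dyadicContent_le hcov).trans (measure_union_le _ _)
    _ = dyadicWeight n δ (F ∪ G) + dyadicWeight n δ (F ∩ G) := by
        rw [add_comm (dyadicWeight n δ (F ∩ G)), ← add_assoc,
          measure_add_sdiff MeasurableSet.of_discrete.nullMeasurableSet,
          union_eq_right.2 (maximalCubes_subset _)]
    _ = dyadicWeight n δ F + dyadicWeight n δ G := measure_union_add_inter _ .of_discrete

end MaximalCubes

lemma measure_setOf_eventually_mem_le {α : Type*} [MeasurableSpace α] (μ : Measure α)
    (s : ℕ → Set α) : μ {x | ∀ᶠ m in atTop, x ∈ s m} ≤ ⨆ m, μ (s m) := by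
  have hs : {x | ∀ᶠ m in atTop, x ∈ s m} = ⋃ M, ⋂ m ≥ M, s m := by
    ext
    simp [eventually_atTop]
  have hmono : Monotone fun M => ⋂ m ≥ M, s m := fun _ _ h =>
    iInter₂_mono' fun m hm => ⟨m, h.trans hm, subset_rfl⟩
  rw [hs, hmono.measure_iUnion]
  exact iSup_mono fun M => measure_mono (iInter₂_subset M le_rfl)

def joinCovers (S : ℕ → Set (DyadicIndex n)) : ℕ → Set (DyadicIndex n)
  | 0 => maximalCubes (S 0)
  | m + 1 => maximalCubes (joinCovers S m ∪ S (m + 1))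

section JoinCovers

variable {S : ℕ → Set (DyadicIndex n)} {K : ℤ}

lemma exists_eq_maximalCubes_joinCovers (S : ℕ → Set (DyadicIndex n)) (m : ℕ) :
    ∃ F, joinCovers S m = maximalCubes F := by
  cases m <;> exact ⟨_, rfl⟩

lemma scale_le_of_mem_joinCovers (hK : ∀ m, ∀ q ∈ S m, q.1 ≤ K) :
    ∀ m, ∀ q ∈ joinCovers S m, q.1 ≤ K
  | 0, q, hq => hK 0 q hq.1
  | m + 1, q, hq => hq.1.elim (scale_le_of_mem_joinCovers hK m q) (hK (m + 1) q)

variable [NeZero n]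

lemma biUnion_subset_biUnion_joinCovers (hK : ∀ m, ∀ q ∈ S m, q.1 ≤ K) (m : ℕ) :
    ⋃ q ∈ S m, dyadicCube q ⊆ ⋃ q ∈ joinCovers S m, dyadicCube q := by
  cases m with
  | zero => exact (biUnion_maximalCubes (hK 0)).ge
  | succ m =>
    rw [joinCovers, biUnion_maximalCubes (fun q hq =>
      hq.elim (scale_le_of_mem_joinCovers hK m q) (hK (m + 1) q))]
    exact biUnion_subset_biUnion_left subset_union_right

lemma exists_superset_mem_joinCovers_succ (hK : ∀ m, ∀ q ∈ S m, q.1 ≤ K) {m : ℕ}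
    {q : DyadicIndex n} (hq : q ∈ joinCovers S m) :
    ∃ r ∈ joinCovers S (m + 1), dyadicCube q ⊆ dyadicCube r :=
  exists_mem_maximalCubes_superset
    (fun r hr => hr.elim (scale_le_of_mem_joinCovers hK m r) (hK (m + 1) r)) (Or.inl hq)

lemma dyadicWeight_joinCovers_le {δ : ℝ} {A : ℕ → Set (EuclideanSpace ℝ (Fin n))}
    (hA : Monotone A) {η : ℕ → ℝ≥0∞} (hK : ∀ m, ∀ q ∈ S m, q.1 ≤ K)
    (hSA : ∀ m, A m ⊆ ⋃ q ∈ S m, dyadicCube q)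
    (hSw : ∀ m, dyadicWeight n δ (S m) ≤ dyadicContent n δ (A m) + η m)
    (hfin : ∀ m, dyadicContent n δ (A m) ≠ ⊤) :
    ∀ m, dyadicWeight n δ (joinCovers S m) ≤
      dyadicContent n δ (A m) + ∑ j ∈ Finset.range (m + 1), η j
  | 0 => by
    rw [zero_add, Finset.sum_range_one]
    exact (measure_mono (maximalCubes_subset _)).trans (hSw 0)
  | m + 1 => by
    have hAm :
        A m ⊆ (⋃ q ∈ joinCovers S m, dyadicCube q) ∩ ⋃ q ∈ S (m + 1), dyadicCube q :=
      subset_inter ((hSA m).trans (biUnion_subset_biUnion_joinCovers hK m))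
        ((hA m.le_succ).trans (hSA (m + 1)))
    have key := calc
      dyadicWeight n δ (joinCovers S (m + 1)) + dyadicContent n δ (A m)
          ≤ dyadicWeight n δ (joinCovers S m) + dyadicWeight n δ (S (m + 1)) :=
        (add_le_add le_rfl (dyadicContent_mono hAm)).trans
          (dyadicWeight_maximalCubes_union_add_le δ _ _)
      _ ≤ (dyadicContent n δ (A m) + ∑ j ∈ Finset.range (m + 1), η j) +
            (dyadicContent n δ (A (m + 1)) + η (m + 1)) :=
        add_le_add (dyadicWeight_joinCovers_le hA hK hSA hSw hfin m) (hSw (m + 1))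
      _ = (dyadicContent n δ (A (m + 1)) + ∑ j ∈ Finset.range (m + 2), η j) +
            dyadicContent n δ (A m) := by
        rw [Finset.sum_range_succ _ (m + 1)]
        ring
    exact (ENNReal.add_le_add_iff_right (hfin m)).1 key

lemma exists_eq_of_dyadicCube_chain {c : ℕ → DyadicIndex n}
    (hc : ∀ m, dyadicCube (c m) ⊆ dyadicCube (c (m + 1))) (hK : ∀ m, (c m).1 ≤ K) :
    ∃ M, ∀ m ≥ M, c m = c M := by
  have hsub : Monotone fun m => dyadicCube (c m) := monotone_nat_of_le_succ hc
  obtain ⟨_, ⟨M, rfl⟩, hmax⟩ :=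
    Int.exists_greatest_of_bdd (P := fun k => ∃ m, (c m).1 = k)
      ⟨K, fun _ ⟨m, hm⟩ => hm ▸ hK m⟩ ⟨_, 0, rfl⟩
  refine ⟨M, fun m hm => (eq_of_dyadicCube_subset ?_ (hsub hm)).symm⟩
  exact le_antisymm (le_of_dyadicCube_subset (hsub hm)) (hmax _ ⟨m, rfl⟩)

/-- The cubes of the successive covers containing a point form an increasing chain, which
stabilises because the scales are bounded. -/
lemma mem_biUnion_eventually_mem_joinCovers (hK : ∀ m, ∀ q ∈ S m, q.1 ≤ K)
    {x : EuclideanSpace ℝ (Fin n)} {m₀ : ℕ}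
    (hx : ∀ m ≥ m₀, x ∈ ⋃ q ∈ joinCovers S m, dyadicCube q) :
    x ∈ ⋃ q ∈ {q | ∀ᶠ m in atTop, q ∈ joinCovers S m}, dyadicCube q := by
  have : ∀ m, ∃ q ∈ joinCovers S (m₀ + m), x ∈ dyadicCube q := fun m => by
    simpa only [mem_iUnion₂, exists_prop] using hx _ (Nat.le_add_right m₀ m)
  choose c hcJ hxc using this
  have hchain : ∀ m, dyadicCube (c m) ⊆ dyadicCube (c (m + 1)) := fun m => by
    obtain ⟨r, hrJ, hcr⟩ := exists_superset_mem_joinCovers_succ hK (hcJ m)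
    obtain ⟨F, hF⟩ := exists_eq_maximalCubes_joinCovers S (m₀ + m + 1)
    rw [hF] at hrJ
    have hr : r = c (m + 1) := eq_of_mem_maximalCubes hrJ (hF ▸ hcJ (m + 1)) (hcr (hxc m)) (hxc _)
    exact hr ▸ hcr
  obtain ⟨M, hM⟩ := exists_eq_of_dyadicCube_chain hchain
    fun m => scale_le_of_mem_joinCovers hK _ _ (hcJ m)
  refine mem_biUnion (eventually_atTop.2 ⟨m₀ + M, fun m hm => ?_⟩) (hxc M)
  obtain ⟨j, rfl⟩ := Nat.exists_eq_add_of_le hm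
  rw [← hM (M + j) (Nat.le_add_right _ _), add_assoc]
  exact hcJ _

end JoinCovers

/-- Davies' increasing sets lemma for the dyadic content. -/
lemma dyadicContent_iUnion_le [NeZero n] {δ : ℝ} (hδ : 0 < δ)
    {A : ℕ → Set (EuclideanSpace ℝ (Fin n))} (hA : Monotone A) :
    dyadicContent n δ (⋃ m, A m) ≤ ⨆ m, dyadicContent n δ (A m) := by
  set L := ⨆ m, dyadicContent n δ (A m)
  refine ENNReal.le_of_forall_pos_le_add fun ε hε hL => ?_
  obtain ⟨η, hη0, hηε⟩ :=
    ENNReal.exists_pos_sum_of_countable (ENNReal.coe_ne_zero.2 hε.ne') ℕ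
  have hAL m : dyadicContent n δ (A m) ≤ L := le_iSup (fun m => dyadicContent n δ (A m)) m
  have hfin m : dyadicContent n δ (A m) ≠ ⊤ := ne_top_of_le_ne_top hL.ne (hAL m)
  have hcov m : ∃ S : Set (DyadicIndex n), A m ⊆ ⋃ q ∈ S, dyadicCube q ∧
      dyadicWeight n δ S < dyadicContent n δ (A m) + η m :=
    exists_cover_of_dyadicContent_lt (ENNReal.lt_add_right (hfin m) (by simpa using (hη0 m).ne'))
  choose S hSA hSw using hcov
  obtain ⟨K, hK⟩ := exists_scale_le_of_dyadicWeight_le (n := n) hδ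
    (ENNReal.add_ne_top.2 ⟨hL.ne, ENNReal.coe_ne_top⟩)
  have hKS m : ∀ q ∈ S m, q.1 ≤ K :=
    hK _ ((hSw m).le.trans (add_le_add (hAL m) ((ENNReal.le_tsum m).trans hηε.le)))
  have hJ m : dyadicWeight n δ (joinCovers S m) ≤ L + ε :=
    (dyadicWeight_joinCovers_le hA hKS hSA (fun m => (hSw m).le) hfin m).trans
      (add_le_add (hAL m) ((ENNReal.sum_le_tsum _).trans hηε.le))
  calc dyadicContent n δ (⋃ m, A m)
      ≤ dyadicWeight n δ {q | ∀ᶠ m in atTop, q ∈ joinCovers S m} :=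
        dyadicContent_le <| iUnion_subset fun m₀ x hx => mem_biUnion_eventually_mem_joinCovers hKS
          fun m hm => biUnion_subset_biUnion_joinCovers hKS m (hSA m (hA hm hx))
    _ ≤ ⨆ m, dyadicWeight n δ (joinCovers S m) := measure_setOf_eventually_mem_le _ _
    _ ≤ L + ε := iSup_le hJ

section HausdorffContent

variable {δ : ℝ} {E : Set (EuclideanSpace ℝ (Fin n))}

lemma hausdorffContent_le_tsum_of_cover (c : ℕ → EuclideanSpace ℝ (Fin n) × ℝ)
    (hc : ∀ i, 0 < (c i).2) (h : E ⊆ ⋃ i, ball (c i).1 (c i).2) :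
    hausdorffContent n δ E ≤ ∑' i, ENNReal.ofReal ((c i).2 ^ δ) :=
  iInf_le_of_le c <| iInf_le_of_le hc <| iInf_le _ h

lemma hausdorffContent_mono_s16 : Monotone (hausdorffContent n δ) := fun _ _ h =>
  le_iInf fun c => le_iInf fun hc => le_iInf fun hF =>
    hausdorffContent_le_tsum_of_cover c hc (h.trans hF)

/-- Covers by countably many balls are turned into the sequences of the definition by padding them
with balls of summable content. -/
lemma hausdorffContent_le_tsum (hδ : 0 < δ) {ι : Type*} [Countable ι]
    (c : ι → EuclideanSpace ℝ (Fin n)) (r : ι → ℝ) (hr : ∀ i, 0 < r i)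
    (h : E ⊆ ⋃ i, ball (c i) (r i)) :
    hausdorffContent n δ E ≤ ∑' i, ENNReal.ofReal (r i ^ δ) := by
  refine ENNReal.le_of_forall_pos_le_add fun ε hε _ => ?_
  obtain ⟨ε', hε'0, hε'⟩ :=
    ENNReal.exists_pos_sum_of_countable (ENNReal.coe_ne_zero.2 hε.ne') ℕ
  have hpad j : ENNReal.ofReal (((ε' j : ℝ) ^ δ⁻¹) ^ δ) = ε' j := by
    rw [← Real.rpow_mul (NNReal.coe_nonneg _), inv_mul_cancel₀ hδ.ne', Real.rpow_one,
      ENNReal.ofReal_coe_nnreal]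
  obtain ⟨e⟩ : Nonempty (ℕ ≃ ι ⊕ ℕ) := inferInstance
  let b : ι ⊕ ℕ → EuclideanSpace ℝ (Fin n) × ℝ :=
    Sum.elim (fun i => (c i, r i)) fun j => (0, (ε' j : ℝ) ^ δ⁻¹)
  have hb : ∀ s, 0 < (b s).2 := by
    rintro (i | j)
    exacts [hr i, Real.rpow_pos_of_pos (hε'0 j) _]
  have hcov : E ⊆ ⋃ j, ball (b (e j)).1 (b (e j)).2 := fun x hx => by
    obtain ⟨i, hi⟩ := mem_iUnion.1 (h hx)
    exact mem_iUnion.2 ⟨e.symm (.inl i), by simpa [b] using hi⟩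
  calc hausdorffContent n δ E ≤ ∑' j, ENNReal.ofReal ((b (e j)).2 ^ δ) :=
        hausdorffContent_le_tsum_of_cover (b ∘ e) (fun j => hb (e j)) hcov
    _ = ∑' s, ENNReal.ofReal ((b s).2 ^ δ) := e.tsum_eq fun s => ENNReal.ofReal ((b s).2 ^ δ)
    _ = ∑' i, ENNReal.ofReal (r i ^ δ) + ∑' j, (ε' j : ℝ≥0∞) := by
        rw [ENNReal.summable.tsum_sum ENNReal.summable]
        simp [b, hpad]
    _ ≤ ∑' i, ENNReal.ofReal (r i ^ δ) + ε := by gcongr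

end HausdorffContent

section Comparison

variable {δ : ℝ} {E : Set (EuclideanSpace ℝ (Fin n))}

lemma hausdorffContent_le_dyadicContent (hδ : 0 < δ) (hδn : δ ≤ n) :
    hausdorffContent n δ E ≤ ENNReal.ofReal ((n + 1) ^ n) * dyadicContent n δ E := by
  have h0 : ENNReal.ofReal (((n : ℝ) + 1) ^ n) ≠ 0 := by simp; positivity
  simp only [dyadicContent, ENNReal.mul_iInf_of_ne h0 ENNReal.ofReal_ne_top]
  refine le_iInf₂ fun S hS => ?_
  calc hausdorffContent n δ E
      ≤ ∑' q : S, ENNReal.ofReal (((n + 1) * 2 ^ q.1.1) ^ δ) :=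
        hausdorffContent_le_tsum hδ (fun q => dyadicCorner q.1) _ (fun _ => by positivity)
          fun x hx => by
            obtain ⟨q, hq, hxq⟩ := mem_iUnion₂.1 (hS hx)
            exact mem_iUnion.2 ⟨⟨q, hq⟩, dyadicCube_subset_ball q hxq⟩
    _ ≤ ∑' q : S, ENNReal.ofReal ((n + 1) ^ n) * ENNReal.ofReal (((2 : ℝ) ^ q.1.1) ^ δ) := by
        gcongr with q
        rw [← ENNReal.ofReal_mul (by positivity), Real.mul_rpow (by positivity) (by positivity)]
        gcongr
        exact rpow_le_pow_of_exponent_le_natCast (by linarith [n.cast_nonneg (α := ℝ)]) hδn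
    _ = ENNReal.ofReal ((n + 1) ^ n) * dyadicWeight n δ S := by
        rw [ENNReal.tsum_mul_left, dyadicWeight_apply]

lemma exists_dyadic_cover_ball (hδ : 0 ≤ δ) (hδn : δ ≤ n) (x : EuclideanSpace ℝ (Fin n))
    {r : ℝ} (hr : 0 < r) :
    ∃ T : Set (DyadicIndex n), ball x r ⊆ ⋃ q ∈ T, dyadicCube q ∧
      dyadicWeight n δ T ≤ ENNReal.ofReal (8 ^ n) * ENNReal.ofReal (r ^ δ) := by
  obtain ⟨k, hk⟩ := exists_mem_Ico_zpow (by positivity : 0 < 2 * r) one_lt_two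
  have hk' : (2 : ℝ) ^ (k + 1) = 2 * 2 ^ k := by rw [zpow_add_one₀ two_ne_zero, mul_comm]
  set m : Fin n → ℤ := fun i => ⌊(x i - r) / 2 ^ (k + 1)⌋
  refine ⟨(fun p => (k + 1, p)) '' (Finset.Icc m (m + 1) : Set (Fin n → ℤ)), ?_, ?_⟩
  · intro y hy
    have hyx i : |y i - x i| < r := (PiLp.dist_apply_le y x i).trans_lt hy
    refine mem_biUnion (x := (k + 1, fun i => ⌊y i / 2 ^ (k + 1)⌋)) ⟨_, ?_, rfl⟩
      (mem_dyadicCube.2 fun i => mem_dyadicInterval_iff.2 rfl)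
    rw [Finset.coe_Icc, mem_Icc, Pi.le_def, Pi.le_def]
    refine ⟨fun i => Int.floor_le_floor ?_, fun i => ?_⟩
    · gcongr
      linarith [abs_lt.1 (hyx i)]
    · rw [Pi.add_apply, Pi.one_apply, ← Int.floor_add_one]
      refine Int.floor_le_floor ?_
      rw [div_add_one (by positivity)]
      gcongr
      linarith [abs_lt.1 (hyx i), hk.2]
  · calc dyadicWeight n δ _
          ≤ ∑ p ∈ Finset.Icc m (m + 1), dyadicWeight n δ {(k + 1, p)} := by
          rw [Set.image_eq_iUnion]
          exact measure_biUnion_finset_le _ _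
      _ = 2 ^ n * ENNReal.ofReal (((2 : ℝ) ^ (k + 1)) ^ δ) := by
          simp [dyadicWeight_singleton, Pi.card_Icc, Int.card_Icc, add_assoc, one_add_one_eq_two]
      _ ≤ ENNReal.ofReal (8 ^ n) * ENNReal.ofReal (r ^ δ) := by
          rw [← ENNReal.ofReal_ofNat 2, ← ENNReal.ofReal_pow zero_le_two,
            ← ENNReal.ofReal_mul (by positivity), ← ENNReal.ofReal_mul (by positivity)]
          refine ENNReal.ofReal_le_ofReal ?_
          calc (2 : ℝ) ^ n * ((2 : ℝ) ^ (k + 1)) ^ δ ≤ 2 ^ n * (4 * r) ^ δ := by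
                gcongr
                linarith [hk.1]
            _ = 2 ^ n * 4 ^ δ * r ^ δ := by rw [Real.mul_rpow (by norm_num) hr.le, mul_assoc]
            _ ≤ 2 ^ n * 4 ^ n * r ^ δ := by
                gcongr
                exact rpow_le_pow_of_exponent_le_natCast (by norm_num) hδn
            _ = 8 ^ n * r ^ δ := by rw [← mul_pow]; norm_num

lemma dyadicContent_le_hausdorffContent (hδ : 0 ≤ δ) (hδn : δ ≤ n) :
    dyadicContent n δ E ≤ ENNReal.ofReal (8 ^ n) * hausdorffContent n δ E := by
  have h0 : ENNReal.ofReal ((8 : ℝ) ^ n) ≠ 0 := by simp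
  simp only [hausdorffContent, ENNReal.mul_iInf_of_ne h0 ENNReal.ofReal_ne_top]
  refine le_iInf fun c => le_iInf fun hc => le_iInf fun hE => ?_
  choose T hT hTw using fun i => exists_dyadic_cover_ball hδ hδn (c i).1 (hc i)
  calc dyadicContent n δ E ≤ dyadicWeight n δ (⋃ i, T i) :=
        dyadicContent_le fun x hx => by
          obtain ⟨i, hi⟩ := mem_iUnion.1 (hE hx)
          obtain ⟨q, hq, hxq⟩ := mem_iUnion₂.1 (hT i hi)
          exact mem_biUnion (mem_iUnion.2 ⟨i, hq⟩) hxq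
    _ ≤ ∑' i, ENNReal.ofReal (8 ^ n) * ENNReal.ofReal ((c i).2 ^ δ) :=
        (measure_iUnion_le _).trans (ENNReal.tsum_le_tsum hTw)
    _ = _ := ENNReal.tsum_mul_left

end Comparison

section Fatou

variable [NeZero n] {δ : ℝ}

lemma hausdorffContent_iUnion_le (hδ : 0 < δ) (hδn : δ ≤ n)
    {A : ℕ → Set (EuclideanSpace ℝ (Fin n))} (hA : Monotone A) :
    hausdorffContent n δ (⋃ m, A m) ≤
      ENNReal.ofReal ((n + 1) ^ n * 8 ^ n) * ⨆ m, hausdorffContent n δ (A m) := by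
  rw [ENNReal.ofReal_mul (by positivity), mul_assoc, ENNReal.mul_iSup]
  calc hausdorffContent n δ (⋃ m, A m)
      ≤ ENNReal.ofReal ((n + 1) ^ n) * dyadicContent n δ (⋃ m, A m) :=
        hausdorffContent_le_dyadicContent hδ hδn
    _ ≤ ENNReal.ofReal ((n + 1) ^ n) * ⨆ m, dyadicContent n δ (A m) := by
        gcongr
        exact dyadicContent_iUnion_le hδ hA
    _ ≤ _ := by
        gcongr
        exact dyadicContent_le_hausdorffContent hδ.le hδn

lemma hausdorffContent_liminf_le (hδ : 0 < δ) (hδn : δ ≤ n)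
    (E : ℕ → Set (EuclideanSpace ℝ (Fin n))) :
    hausdorffContent n δ (liminf E atTop) ≤
      ENNReal.ofReal ((n + 1) ^ n * 8 ^ n) *
        liminf (fun i => hausdorffContent n δ (E i)) atTop := by
  rw [liminf_eq_iSup_iInf_of_nat, liminf_eq_iSup_iInf_of_nat]
  refine (hausdorffContent_iUnion_le hδ hδn
    fun _ _ h => biInf_mono fun _ hi => h.trans hi).trans ?_
  gcongr with N
  exact le_iInf₂ fun i hi => hausdorffContent_mono_s16 (iInter₂_subset i hi)

end Fatou

end

/-- A Fatou-type lemma for the Choquet integral with respect to the Hausdorff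
content. -/
theorem stmt_16 (n : ℕ) (hn : 1 ≤ n) :
    ∃ c : ℝ, 0 < c ∧ ∀ δ : ℝ, 0 < δ → δ ≤ n →
      ∀ f : ℕ → EuclideanSpace ℝ (Fin n) → ℝ≥0∞,
        choquetIntegral n δ (fun x => Filter.liminf (fun i => f i x) Filter.atTop)
          ≤ ENNReal.ofReal c *
            Filter.liminf (fun i => choquetIntegral n δ (f i)) Filter.atTop := by
  have : NeZero n := ⟨by omega⟩
  refine ⟨(n + 1) ^ n * 8 ^ n, by positivity, fun δ hδ hδn f => ?_⟩
  have hlevel (t : ℝ) : {x | ENNReal.ofReal t < liminf (fun i => f i x) atTop} ⊆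
      liminf (fun i => {x | ENNReal.ofReal t < f i x}) atTop := fun x hx =>
    mem_liminf_iff_eventually_mem.2 (eventually_lt_of_lt_liminf (u := fun i => f i x) hx)
  have hmeas (i : ℕ) :
      Measurable fun t : ℝ => hausdorffContent n δ {x | ENNReal.ofReal t < f i x} :=
    Antitone.measurable fun _ _ hst => hausdorffContent_mono_s16 fun _ hx =>
      (ENNReal.ofReal_le_ofReal hst).trans_lt hx
  calc choquetIntegral n δ (fun x => liminf (fun i => f i x) atTop)
      ≤ ∫⁻ t in Ioi 0, ENNReal.ofReal ((n + 1) ^ n * 8 ^ n) *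
          liminf (fun i => hausdorffContent n δ {x | ENNReal.ofReal t < f i x}) atTop :=
        lintegral_mono fun t =>
          (hausdorffContent_mono_s16 (hlevel t)).trans (hausdorffContent_liminf_le hδ hδn _)
    _ = ENNReal.ofReal ((n + 1) ^ n * 8 ^ n) * ∫⁻ t in Ioi 0,
          liminf (fun i => hausdorffContent n δ {x | ENNReal.ofReal t < f i x}) atTop :=
        lintegral_const_mul' _ _ ENNReal.ofReal_ne_top
    _ ≤ ENNReal.ofReal ((n + 1) ^ n * 8 ^ n) *
          liminf (fun i => choquetIntegral n δ (f i)) atTop := by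
        gcongr
        exact lintegral_liminf_le hmeas
end
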